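/- arXiv:1303.5678 — 2 statements merged into one kernel-verified Lean document; each statement's English description precedes it below -/
import Mathlib

section
/- Let r ≥ 1 and N, M be natural numbers. Let B1, …, Br and C1, …, Cr be complex N × M matrices, and let A_r be the associated block matrix. Assume A_r has rank min(rN, (r+1)M). Suppose V1, …, Vr are ℂ-subspaces of ℂ^N and U1, …, U_{r+1} are ℂ-subspaces of ℂ^M such that for each j with 1 ≤ j ≤ r: for all v ∈ Vj and u ∈ Uj the standard Hermitian inner product of v with Bj·u is zero, and for all v ∈ Vj and u ∈ U_{j+1} the standard Hermitian inner product of v with Cj·u is zero. Then (dim V1 + ⋯ + dim Vr) + (dim U1 + ⋯ + dim U_{r+1}) ≤ max(rN, (r+1)M). -/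
open Matrix

/-- The `rN × (r+1)M` block matrix whose `j`-th block row carries `B j` in block
column `j`, `C j` in block column `j+1`, and zero blocks elsewhere. -/
def alignBlock {r N M : ℕ} (B C : Fin r → Matrix (Fin N) (Fin M) ℂ) :
    Matrix (Fin r × Fin N) (Fin (r + 1) × Fin M) ℂ :=
  Matrix.of fun p q =>
    if (q.1 : ℕ) = (p.1 : ℕ) then B p.1 p.2 q.2
    else if (q.1 : ℕ) = (p.1 : ℕ) + 1 then C p.1 p.2 q.2
    else 0

/-! Stack the `V j` into one subspace `V'` of `ℂ^(rN)` and the `U j` into `U'` of `ℂ^((r+1)M)`.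
The orthogonality hypotheses say exactly that `V'` is orthogonal to `A_r U'`, so
`dim V' + dim A_r U' ≤ rN`, while rank–nullity gives
`dim U' ≤ dim A_r U' + dim ker A_r = dim A_r U' + (r+1)M - rank A_r`. Adding the two,
`dim V' + dim U' ≤ rN + (r+1)M - min(rN, (r+1)M) = max(rN, (r+1)M)`. -/

open Module

theorem Submodule.IsOrtho.finrank_add_finrank_le {𝕜 E : Type*} [RCLike 𝕜]
    [NormedAddCommGroup E] [InnerProductSpace 𝕜 E] [FiniteDimensional 𝕜 E]
    {V W : Submodule 𝕜 E} (h : V ⟂ W) : finrank 𝕜 V + finrank 𝕜 W ≤ finrank 𝕜 E := by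
  rw [← W.finrank_add_finrank_orthogonal, add_comm (finrank 𝕜 W)]
  exact Nat.add_le_add_right (Submodule.finrank_mono h) _

theorem finrank_add_finrank_le_card_of_star_dotProduct_eq_zero {𝕜 ι : Type*} [RCLike 𝕜]
    [Fintype ι] {V W : Submodule 𝕜 (ι → 𝕜)} (h : ∀ v ∈ V, ∀ w ∈ W, star v ⬝ᵥ w = 0) :
    finrank 𝕜 V + finrank 𝕜 W ≤ Fintype.card ι := by
  let e : (ι → 𝕜) ≃ₗ[𝕜] EuclideanSpace 𝕜 ι := (WithLp.linearEquiv 2 𝕜 (ι → 𝕜)).symm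
  have hortho : V.map e.toLinearMap ⟂ W.map e.toLinearMap := by
    rintro _ ⟨v, hv, rfl⟩
    rw [Submodule.mem_orthogonal']
    rintro _ ⟨w, hw, rfl⟩
    rw [EuclideanSpace.inner_eq_star_dotProduct, dotProduct_comm]
    exact h v hv w hw
  simpa only [LinearEquiv.finrank_map_eq, finrank_euclideanSpace] using
    hortho.finrank_add_finrank_le

theorem Submodule.finrank_le_finrank_map_add_finrank_ker {K E F : Type*} [DivisionRing K]
    [AddCommGroup E] [Module K E] [FiniteDimensional K E] [AddCommGroup F] [Module K F]
    (f : E →ₗ[K] F) (U : Submodule K E) :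
    finrank K U ≤ finrank K (U.map f) + finrank K (LinearMap.ker f) := by
  rw [← (f.domRestrict U).finrank_range_add_finrank_ker, LinearMap.range_domRestrict]
  gcongr
  rw [LinearMap.ker_domRestrict, ← Submodule.finrank_map_subtype_eq]
  exact Submodule.finrank_mono (Submodule.map_comap_le _ _)

theorem Matrix.finrank_add_finrank_add_rank_le {𝕜 m n : Type*} [RCLike 𝕜] [Fintype m]
    [Fintype n] (A : Matrix m n 𝕜) {V : Submodule 𝕜 (m → 𝕜)} {U : Submodule 𝕜 (n → 𝕜)}
    (h : ∀ v ∈ V, ∀ u ∈ U, star v ⬝ᵥ A *ᵥ u = 0) :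
    finrank 𝕜 V + finrank 𝕜 U + A.rank ≤ Fintype.card m + Fintype.card n := by
  have hortho : finrank 𝕜 V + finrank 𝕜 (U.map A.mulVecLin) ≤ Fintype.card m :=
    finrank_add_finrank_le_card_of_star_dotProduct_eq_zero <| by
      rintro v hv _ ⟨u, hu, rfl⟩
      exact h v hv u hu
  have hnullity : A.rank + finrank 𝕜 (LinearMap.ker A.mulVecLin) = Fintype.card n := by
    rw [Matrix.rank, LinearMap.finrank_range_add_finrank_ker, Module.finrank_fintype_fun_eq_card]
  have := U.finrank_le_finrank_map_add_finrank_ker A.mulVecLin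
  omega

namespace Submodule

variable {K ι κ : Type*} [Field K] (V : ι → Submodule K (κ → K))

def blockPi : Submodule K (ι × κ → K) :=
  (pi Set.univ V).comap (LinearEquiv.curry K K ι κ).toLinearMap

variable {V} in
theorem mem_blockPi {x : ι × κ → K} : x ∈ blockPi V ↔ ∀ i, (fun k => x (i, k)) ∈ V i := by
  simp only [blockPi, mem_comap, LinearEquiv.coe_coe, LinearEquiv.coe_curry, mem_pi,
    Set.mem_univ, forall_const]
  rfl

def blockPiEquiv : blockPi V ≃ₗ[K] ∀ i, V i where
  toFun x i := ⟨fun k => x.1 (i, k), mem_blockPi.1 x.2 i⟩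
  invFun y := ⟨fun p => (y p.1).1 p.2, mem_blockPi.2 fun i => (y i).2⟩
  map_add' _ _ := rfl
  map_smul' _ _ := rfl
  left_inv _ := rfl
  right_inv _ := rfl

theorem finrank_blockPi [Fintype ι] [Finite κ] :
    finrank K (blockPi V) = ∑ i, finrank K (V i) := by
  rw [(blockPiEquiv V).finrank_eq, Module.finrank_pi_fintype]

end Submodule

section AlignBlock

variable {r N M : ℕ} (B C : Fin r → Matrix (Fin N) (Fin M) ℂ)

theorem alignBlock_mulVec (u : Fin (r + 1) × Fin M → ℂ) (j : Fin r) (n : Fin N) :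
    (alignBlock B C *ᵥ u) (j, n)
      = (B j *ᵥ fun m => u (j.castSucc, m)) n + (C j *ᵥ fun m => u (j.succ, m)) n := by
  have hcast (k : Fin (r + 1)) : (k : ℕ) = j ↔ k = j.castSucc := by simp [Fin.ext_iff]
  have hsucc (k : Fin (r + 1)) : (k : ℕ) = j + 1 ↔ k = j.succ := by simp [Fin.ext_iff]
  have hne : j.succ ≠ j.castSucc := Fin.castSucc_lt_succ.ne'
  simp only [mulVec, dotProduct, alignBlock, of_apply, Fintype.sum_prod_type, hcast, hsucc,
    ite_mul, zero_mul, Finset.sum_ite_irrel, Finset.sum_const_zero]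
  simp [Finset.sum_ite, Finset.filter_eq', Finset.filter_ne', hne]

theorem star_dotProduct_alignBlock_mulVec (v : Fin r × Fin N → ℂ)
    (u : Fin (r + 1) × Fin M → ℂ) :
    star v ⬝ᵥ alignBlock B C *ᵥ u = ∑ j,
      (star (fun n => v (j, n)) ⬝ᵥ B j *ᵥ (fun m => u (j.castSucc, m))
        + star (fun n => v (j, n)) ⬝ᵥ C j *ᵥ (fun m => u (j.succ, m))) := by
  simp only [dotProduct, Fintype.sum_prod_type, alignBlock_mulVec, mul_add,
    Finset.sum_add_distrib]
  rfl

end AlignBlock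

theorem alignment_path_necessary_general
    (r N M : ℕ)
    (B C : Fin r → Matrix (Fin N) (Fin M) ℂ)
    (hrank : (alignBlock B C).rank = min (r * N) ((r + 1) * M))
    (V : Fin r → Submodule ℂ (Fin N → ℂ))
    (U : Fin (r + 1) → Submodule ℂ (Fin M → ℂ))
    (horthB : ∀ j : Fin r, ∀ v ∈ V j, ∀ u ∈ U j.castSucc,
      star v ⬝ᵥ (B j).mulVec u = 0)
    (horthC : ∀ j : Fin r, ∀ v ∈ V j, ∀ u ∈ U j.succ,
      star v ⬝ᵥ (C j).mulVec u = 0) :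
    (∑ j, Module.finrank ℂ (V j)) + (∑ j, Module.finrank ℂ (U j))
      ≤ max (r * N) ((r + 1) * M) := by
  have horth : ∀ v ∈ Submodule.blockPi V, ∀ u ∈ Submodule.blockPi U,
      star v ⬝ᵥ alignBlock B C *ᵥ u = 0 := by
    intro v hv u hu
    rw [Submodule.mem_blockPi] at hv hu
    rw [star_dotProduct_alignBlock_mulVec]
    refine Finset.sum_eq_zero fun j _ => ?_
    rw [horthB j _ (hv j) _ (hu _), horthC j _ (hv j) _ (hu _), add_zero]
  have := (alignBlock B C).finrank_add_finrank_add_rank_le horth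
  rw [Submodule.finrank_blockPi, Submodule.finrank_blockPi, hrank] at this
  simp only [Fintype.card_prod, Fintype.card_fin] at this
  omega

/-- general alignment-path necessary condition, Theorem 2.
If the block matrix `A_r` built from `B1,…,Br` and `C1,…,Cr` has full rank, and
for each `j` the subspace `Vj` is orthogonal to `Bj·Uj` and to `Cj·U_{j+1}`, then
`∑ dim Vj + ∑ dim Uj ≤ max (rN) ((r+1)M)`. -/
theorem alignment_path_necessary
    (r N M : ℕ) (hr : 1 ≤ r)
    (B C : Fin r → Matrix (Fin N) (Fin M) ℂ)
    (hrank : (alignBlock B C).rank = min (r * N) ((r + 1) * M))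
    (V : Fin r → Submodule ℂ (Fin N → ℂ))
    (U : Fin (r + 1) → Submodule ℂ (Fin M → ℂ))
    (horthB : ∀ j : Fin r, ∀ v ∈ V j, ∀ u ∈ U j.castSucc,
      star v ⬝ᵥ (B j).mulVec u = 0)
    (horthC : ∀ j : Fin r, ∀ v ∈ V j, ∀ u ∈ U j.succ,
      star v ⬝ᵥ (C j).mulVec u = 0) :
    (∑ j, Module.finrank ℂ (V j)) + (∑ j, Module.finrank ℂ (U j))
      ≤ max (r * N) ((r + 1) * M) :=
  alignment_path_necessary_general r N M B C hrank V U horthB horthC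
end

section
/- Let K ≥ 1 and, for 1 ≤ i ≤ K, let M_i, N_i, d_i be natural numbers with d_i ≤ min(M_i, N_i). For each i, let U_i ⊆ ℂ^{M_i} and V_i ⊆ ℂ^{N_i} be ℂ-subspaces with dim U_i = dim V_i = d_i. Then the set of channel-matrix tuples (H_{ij})_{i ≠ j}, where H_{ij} ∈ Matrix (Fin N_i) (Fin M_j) ℂ, such that for all i ≠ j, all u ∈ U_j and all v ∈ V_i the standard Hermitian inner product of v with H_{ij}·u is zero, is a ℂ-linear subspace of the product space ∏_{i ≠ j} Matrix (Fin N_i) (Fin M_j) ℂ of dimension ∑_{i ≠ j} (N_i·M_j − d_i·d_j). -/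
/-!
A channel `H` makes the strategy feasible exactly when it maps `U` into the orthogonal
complement `Vᗮ` of `V` for the Hermitian product. Restricting to `U` and reducing modulo `Vᗮ`
is a surjection from all `N × M` matrices onto `Hom(U, ℂᴺ ⧸ Vᗮ)`, a space of dimension
`dim U · dim V`, and its kernel is the set of feasible channels; rank–nullity gives
`N M − dim U · dim V`. The conditions on different pairs `(i, j)` are independent, so the
dimensions add up.
-/

open Matrix Module

theorem Submodule.finrank_pi_univ {K ι : Type*} [DivisionRing K] [Fintype ι]
    {φ : ι → Type*} [∀ i, AddCommGroup (φ i)] [∀ i, Module K (φ i)]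
    [∀ i, FiniteDimensional K (φ i)] (p : ∀ i, Submodule K (φ i)) :
    finrank K (pi Set.univ p) = ∑ i, finrank K (p i) := by
  let e : pi Set.univ p ≃ₗ[K] ∀ i, p i :=
    { toFun := fun x i => ⟨x.1 i, x.2 i (Set.mem_univ i)⟩
      map_add' := fun _ _ => rfl
      map_smul' := fun _ _ => rfl
      invFun := fun y => ⟨fun i => y i, fun i _ => (y i).2⟩
      left_inv := fun _ => rfl
      right_inv := fun _ => rfl }
  rw [e.finrank_eq, finrank_pi_fintype]

theorem Submodule.finrank_compatibleMaps_add {K V W : Type*} [Field K]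
    [AddCommGroup V] [Module K V] [FiniteDimensional K V]
    [AddCommGroup W] [Module K W] [FiniteDimensional K W]
    (p : Submodule K V) (q : Submodule K W) :
    finrank K (compatibleMaps p q) + finrank K p * finrank K (W ⧸ q) =
      finrank K V * finrank K W := by
  let restrict : (V →ₗ[K] W) →ₗ[K] p →ₗ[K] W ⧸ q :=
    LinearMap.lcomp K _ p.subtype ∘ₗ LinearMap.compRight K q.mkQ
  have hker : LinearMap.ker restrict = compatibleMaps p q := by
    ext f
    simp [restrict, compatibleMaps, SetLike.le_def, LinearMap.ext_iff]
  have hsurj : Function.Surjective restrict := by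
    intro g
    obtain ⟨s, hs⟩ := q.mkQ.exists_rightInverse_of_surjective q.range_mkQ
    obtain ⟨f, hf⟩ := LinearMap.exists_extend (s ∘ₗ g)
    refine ⟨f, ?_⟩
    show q.mkQ ∘ₗ f ∘ₗ p.subtype = g
    rw [hf, ← LinearMap.comp_assoc, hs, LinearMap.id_comp]
  have hrank := LinearMap.finrank_range_add_finrank_ker restrict
  rw [LinearMap.range_eq_top.2 hsurj, finrank_top, hker, finrank_linearMap,
    finrank_linearMap] at hrank
  omega

section

variable {𝕜 : Type*} [RCLike 𝕜]

noncomputable def Submodule.starDotOrthogonal {ι : Type*} [Fintype ι]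
    (V : Submodule 𝕜 (ι → 𝕜)) : Submodule 𝕜 (ι → 𝕜) :=
  (V.map (WithLp.linearEquiv 2 𝕜 (ι → 𝕜)).symm.toLinearMap)ᗮ.map
    (WithLp.linearEquiv 2 𝕜 (ι → 𝕜)).toLinearMap

namespace Submodule

variable {ι : Type*} [Fintype ι]

theorem mem_starDotOrthogonal {V : Submodule 𝕜 (ι → 𝕜)} {w : ι → 𝕜} :
    w ∈ V.starDotOrthogonal ↔ ∀ v ∈ V, star v ⬝ᵥ w = 0 := by
  simp only [starDotOrthogonal, mem_map_equiv, mem_orthogonal, LinearEquiv.symm_symm,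
    (WithLp.toLp_surjective 2).forall]
  simp [EuclideanSpace.inner_toLp_toLp, dotProduct_comm w]

theorem finrank_add_finrank_starDotOrthogonal (V : Submodule 𝕜 (ι → 𝕜)) :
    finrank 𝕜 V + finrank 𝕜 V.starDotOrthogonal = Fintype.card ι := by
  rw [starDotOrthogonal, LinearEquiv.finrank_map_eq,
    ← (WithLp.linearEquiv 2 𝕜 (ι → 𝕜)).symm.finrank_map_eq V, finrank_add_finrank_orthogonal,
    finrank_euclideanSpace]

end Submodule

namespace Matrix

variable {m n : Type*} [Fintype m] [Fintype n] [DecidableEq m]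

noncomputable def feasibleChannels (U : Submodule 𝕜 (m → 𝕜)) (V : Submodule 𝕜 (n → 𝕜)) :
    Submodule 𝕜 (Matrix n m 𝕜) :=
  (U.compatibleMaps V.starDotOrthogonal).comap (toLin' : Matrix n m 𝕜 ≃ₗ[𝕜] _).toLinearMap

theorem mem_feasibleChannels {U : Submodule 𝕜 (m → 𝕜)} {V : Submodule 𝕜 (n → 𝕜)}
    {H : Matrix n m 𝕜} :
    H ∈ feasibleChannels U V ↔ ∀ u ∈ U, ∀ v ∈ V, star v ⬝ᵥ H *ᵥ u = 0 := by
  simp [feasibleChannels, Submodule.compatibleMaps, SetLike.le_def,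
    Submodule.mem_starDotOrthogonal]

theorem finrank_feasibleChannels (U : Submodule 𝕜 (m → 𝕜)) (V : Submodule 𝕜 (n → 𝕜)) :
    finrank 𝕜 (feasibleChannels U V) =
      Fintype.card n * Fintype.card m - finrank 𝕜 U * finrank 𝕜 V := by
  have hquot : finrank 𝕜 ((n → 𝕜) ⧸ V.starDotOrthogonal) = finrank 𝕜 V := by
    have hsplit := V.starDotOrthogonal.finrank_quotient_add_finrank
    have horth := V.finrank_add_finrank_starDotOrthogonal
    rw [finrank_fintype_fun_eq_card] at hsplit
    omega
  have hcompat := U.finrank_compatibleMaps_add V.starDotOrthogonal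
  rw [hquot, finrank_fintype_fun_eq_card, finrank_fintype_fun_eq_card] at hcompat
  rw [feasibleChannels, Submodule.comap_equiv_eq_map_symm, LinearEquiv.finrank_map_eq,
    Nat.mul_comm (Fintype.card n), ← hcompat, Nat.add_sub_cancel]

end Matrix

end

theorem channel_fiber_is_linear_of_dim_general
    (K : ℕ) (M N d : Fin K → ℕ)
    (U : ∀ i, Submodule ℂ (Fin (M i) → ℂ))
    (V : ∀ i, Submodule ℂ (Fin (N i) → ℂ))
    (hU : ∀ i, Module.finrank ℂ (U i) = d i)
    (hV : ∀ i, Module.finrank ℂ (V i) = d i) :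
    ∃ W : Submodule ℂ
        (∀ p : {p : Fin K × Fin K // p.1 ≠ p.2},
          Matrix (Fin (N p.1.1)) (Fin (M p.1.2)) ℂ),
      (W : Set (∀ p : {p : Fin K × Fin K // p.1 ≠ p.2},
          Matrix (Fin (N p.1.1)) (Fin (M p.1.2)) ℂ))
        = {Hc | ∀ p : {p : Fin K × Fin K // p.1 ≠ p.2},
            ∀ u ∈ U p.1.2, ∀ v ∈ V p.1.1, star v ⬝ᵥ (Hc p).mulVec u = 0} ∧
      Module.finrank ℂ W
        = ∑ p : {p : Fin K × Fin K // p.1 ≠ p.2},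
            (N p.1.1 * M p.1.2 - d p.1.1 * d p.1.2) := by
  refine ⟨Submodule.pi Set.univ fun p => feasibleChannels (U p.1.2) (V p.1.1), ?_, ?_⟩
  · ext Hc
    simp [mem_feasibleChannels]
  · rw [Submodule.finrank_pi_univ]
    refine Finset.sum_congr rfl fun p _ => ?_
    rw [finrank_feasibleChannels, hU, hV, Fintype.card_fin, Fintype.card_fin, Nat.mul_comm (d _)]

/-- fiber-dimension claim in Lemma 12. For a fixed alignment
strategy `(U_i, V_i)` with `dim U_i = dim V_i = d_i ≤ min (M_i) (N_i)`, the set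
of channel-matrix tuples `(H_{ij})_{i ≠ j}` for which the strategy is feasible
is a `ℂ`-subspace of dimension `∑_{i ≠ j} (N_i·M_j − d_i·d_j)`. -/
theorem channel_fiber_is_linear_of_dim
    (K : ℕ) (hK : 1 ≤ K) (M N d : Fin K → ℕ)
    (hd : ∀ i, d i ≤ min (M i) (N i))
    (U : ∀ i, Submodule ℂ (Fin (M i) → ℂ))
    (V : ∀ i, Submodule ℂ (Fin (N i) → ℂ))
    (hU : ∀ i, Module.finrank ℂ (U i) = d i)
    (hV : ∀ i, Module.finrank ℂ (V i) = d i) :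
    ∃ W : Submodule ℂ
        (∀ p : {p : Fin K × Fin K // p.1 ≠ p.2},
          Matrix (Fin (N p.1.1)) (Fin (M p.1.2)) ℂ),
      (W : Set (∀ p : {p : Fin K × Fin K // p.1 ≠ p.2},
          Matrix (Fin (N p.1.1)) (Fin (M p.1.2)) ℂ))
        = {Hc | ∀ p : {p : Fin K × Fin K // p.1 ≠ p.2},
            ∀ u ∈ U p.1.2, ∀ v ∈ V p.1.1, star v ⬝ᵥ (Hc p).mulVec u = 0} ∧
      Module.finrank ℂ W
        = ∑ p : {p : Fin K × Fin K // p.1 ≠ p.2},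
            (N p.1.1 * M p.1.2 - d p.1.1 * d p.1.2) :=
  channel_fiber_is_linear_of_dim_general K M N d U V hU hV
end
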